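/- arXiv:1706.07010 — 2 statements merged into one kernel-verified Lean document; each statement's English description precedes it below -/
import Mathlib

section
/- Let D, H > 0 with D ≤ 2H/√3, and define ψ(x) = 1/((x + D/2)² + H²) + 1/((x - D/2)² + H²). Then ψ attains its unique global maximum over the interval [-D/2, D/2] at x = 0; moreover ψ is strictly increasing on [-D/2, 0] and strictly decreasing on [0, D/2]. -/
/-!
Writing `u = x + D/2` and `v = D/2 - x`, the derivative of `ψ` is `2 (g v - g u)` with
`g t = t / (t² + H²)²`. The identity
`b (a² + H²)² - a (b² + H²)² = (b - a) ((H² - ab)² - ab (a + b)²)`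
shows `g a < g b` for `0 ≤ a < b` as soon as `3 (a + b)² ≤ 4 H²`, since then
`H² - ab ≥ 3 (a + b)² / 4 - ab` and `ab < (a + b)² / 4`. Since `u + v = D`, the
hypothesis `D ≤ 2H/√3` is exactly this condition, so the sign of `ψ'` is the sign of `v - u = -2x`.
-/

open Set

lemma div_sq_add_sq_sq_lt {a b H : ℝ} (ha : 0 ≤ a) (hab : a < b) (h : 3 * (a + b) ^ 2 ≤ 4 * H ^ 2) :
    a / (a ^ 2 + H ^ 2) ^ 2 < b / (b ^ 2 + H ^ 2) ^ 2 := by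
  have hb : 0 < b := ha.trans_lt hab
  have hH : 0 < H ^ 2 := by nlinarith
  have hp : a * b < (a + b) ^ 2 / 4 := by nlinarith [sq_pos_of_pos (sub_pos.2 hab)]
  have hgap : a * b * (a + b) ^ 2 < (H ^ 2 - a * b) ^ 2 :=
    calc a * b * (a + b) ^ 2
        < (3 * (a + b) ^ 2 / 4 - a * b) ^ 2 := by
          nlinarith [mul_pos (sub_pos.2 hp) (show 0 < 9 * (a + b) ^ 2 / 4 - a * b by nlinarith)]
      _ ≤ (H ^ 2 - a * b) ^ 2 := pow_le_pow_left₀ (by nlinarith) (by linarith) 2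
  have hfactor : b * (a ^ 2 + H ^ 2) ^ 2 - a * (b ^ 2 + H ^ 2) ^ 2
      = (b - a) * ((H ^ 2 - a * b) ^ 2 - a * b * (a + b) ^ 2) := by ring
  rw [div_lt_div_iff₀ (pow_pos (by positivity) 2) (pow_pos (by positivity) 2)]
  nlinarith [mul_pos (sub_pos.2 hab) (sub_pos.2 hgap)]

section

variable {H : ℝ}

lemma hasDerivAt_one_div_sq_add_sq (hH : H ≠ 0) (t : ℝ) :
    HasDerivAt (fun t => 1 / (t ^ 2 + H ^ 2)) (-(2 * t) / (t ^ 2 + H ^ 2) ^ 2) t := by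
  have hden : t ^ 2 + H ^ 2 ≠ 0 := by positivity
  simpa [one_div, neg_div, mul_comm] using ((hasDerivAt_pow 2 t).add_const (H ^ 2)).fun_inv hden

lemma hasDerivAt_psi (D : ℝ) (hH : H ≠ 0) (x : ℝ) :
    HasDerivAt (fun x => 1 / ((x + D / 2) ^ 2 + H ^ 2) + 1 / ((x - D / 2) ^ 2 + H ^ 2))
      (2 * ((D / 2 - x) / ((D / 2 - x) ^ 2 + H ^ 2) ^ 2
        - (x + D / 2) / ((x + D / 2) ^ 2 + H ^ 2) ^ 2)) x := by
  refine (((hasDerivAt_one_div_sq_add_sq hH _).comp_add_const x (D / 2)).add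
    ((hasDerivAt_one_div_sq_add_sq hH _).comp_sub_const x (D / 2))).congr_deriv ?_
  rw [show (D / 2 - x) ^ 2 = (x - D / 2) ^ 2 by ring]
  ring

lemma continuous_psi (D : ℝ) (hH : H ≠ 0) :
    Continuous (fun x => 1 / ((x + D / 2) ^ 2 + H ^ 2) + 1 / ((x - D / 2) ^ 2 + H ^ 2)) :=
  continuous_iff_continuousAt.2 fun x => (hasDerivAt_psi D hH x).continuousAt

lemma strictMonoOn_psi {D : ℝ} (hD : 3 * D ^ 2 ≤ 4 * H ^ 2) (hH : H ≠ 0) :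
    StrictMonoOn (fun x => 1 / ((x + D / 2) ^ 2 + H ^ 2) + 1 / ((x - D / 2) ^ 2 + H ^ 2))
      (Icc (-(D / 2)) 0) := by
  refine strictMonoOn_of_hasDerivWithinAt_pos (convex_Icc _ _) (continuous_psi D hH).continuousOn
    (fun x _ => (hasDerivAt_psi D hH x).hasDerivWithinAt) fun x hx => ?_
  rw [interior_Icc] at hx
  have := div_sq_add_sq_sq_lt (a := x + D / 2) (b := D / 2 - x) (H := H)
    (by linarith [hx.1]) (by linarith [hx.2]) (by ring_nf; linarith)
  linarith

lemma strictAntiOn_psi {D : ℝ} (hD : 3 * D ^ 2 ≤ 4 * H ^ 2) (hH : H ≠ 0) :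
    StrictAntiOn (fun x => 1 / ((x + D / 2) ^ 2 + H ^ 2) + 1 / ((x - D / 2) ^ 2 + H ^ 2))
      (Icc 0 (D / 2)) := by
  refine strictAntiOn_of_hasDerivWithinAt_neg (convex_Icc _ _) (continuous_psi D hH).continuousOn
    (fun x _ => (hasDerivAt_psi D hH x).hasDerivWithinAt) fun x hx => ?_
  rw [interior_Icc] at hx
  have := div_sq_add_sq_sq_lt (a := D / 2 - x) (b := x + D / 2) (H := H)
    (by linarith [hx.2]) (by linarith [hx.1]) (by ring_nf; linarith)
  linarith

end

lemma three_mul_sq_le_of_le_div_sqrt_three {D H : ℝ} (hD : 0 ≤ D) (h : D ≤ 2 * H / Real.sqrt 3) :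
    3 * D ^ 2 ≤ 4 * H ^ 2 := by
  have hsqrt : D * Real.sqrt 3 ≤ 2 * H := (le_div_iff₀ (by positivity)).1 h
  calc 3 * D ^ 2 = (D * Real.sqrt 3) ^ 2 := by rw [mul_pow, Real.sq_sqrt (by norm_num)]; ring
    _ ≤ (2 * H) ^ 2 := pow_le_pow_left₀ (by positivity) hsqrt 2
    _ = 4 * H ^ 2 := by ring

/-- When D ≤ 2H/√3, ψ has its unique global maximum on [-D/2, D/2] at 0,
is strictly increasing on [-D/2,0] and strictly decreasing on [0,D/2]. -/
theorem psi_max_close (D H : ℝ) (hD : 0 < D) (hH : 0 < H)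
    (hclose : D ≤ 2 * H / Real.sqrt 3)
    (ψ : ℝ → ℝ)
    (hψ : ∀ x, ψ x = 1 / ((x + D / 2) ^ 2 + H ^ 2) + 1 / ((x - D / 2) ^ 2 + H ^ 2)) :
    (∀ x ∈ Set.Icc (-(D / 2)) (D / 2), x ≠ 0 → ψ x < ψ 0) ∧
    StrictMonoOn ψ (Set.Icc (-(D / 2)) 0) ∧
    StrictAntiOn ψ (Set.Icc 0 (D / 2)) := by
  obtain rfl := funext hψ
  have hDH := three_mul_sq_le_of_le_div_sqrt_three hD.le hclose
  have hmono := strictMonoOn_psi hDH hH.ne'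
  have hanti := strictAntiOn_psi hDH hH.ne'
  refine ⟨fun x ⟨hx₁, hx₂⟩ hx₀ => ?_, hmono, hanti⟩
  rcases hx₀.lt_or_gt with hneg | hpos
  · exact hmono ⟨hx₁, hneg.le⟩ ⟨by linarith, le_rfl⟩ hneg
  · exact hanti ⟨le_rfl, by linarith⟩ ⟨hpos.le, hx₂⟩ hpos
end

section
/- Let D, H, T > 0, D ≤ 2H/√3, and let Q₁, Q₂ be as above. For any trajectory x : [0,T] → ℝ, the total delivered energy satisfies ∫₀ᵀ (Q₁(x(t)) + Q₂(x(t))) dt ≤ T·(Q₁(0) + Q₂(0)) = 2T/(D²/4 + H²), with equality if and only if x(t) = 0 for almost every t. -/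
/-!
With `a = D/2`, the received power is `P(y) = 1/((y+a)²+H²) + 1/((y-a)²+H²)`. Clearing
denominators, `P(0) - P(y)` has the sign of `y² (y² + H² - 3a²)`, which is positive for every
`y ≠ 0` as soon as `3a² ≤ H²`, i.e. `D ≤ 2H/√3`. So hovering at the midpoint maximizes the power
pointwise; integrating over `[0,T]` gives the energy bound, and equality of the integrals forces
`P(x t) = P(0)`, hence `x t = 0`, almost everywhere.
-/

open intervalIntegral MeasureTheory Set

noncomputable section

def totalPower (a H y : ℝ) : ℝ := 1 / ((y + a) ^ 2 + H ^ 2) + 1 / ((y - a) ^ 2 + H ^ 2)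

namespace totalPower

variable {a H : ℝ}

theorem at_zero (a H : ℝ) : totalPower a H 0 = 2 / (a ^ 2 + H ^ 2) := by
  simp only [totalPower, zero_add, zero_sub, neg_sq]
  ring

theorem nonneg (a H y : ℝ) : 0 ≤ totalPower a H y := by
  unfold totalPower; positivity

theorem continuous (hH : H ≠ 0) : Continuous (totalPower a H) := by
  unfold totalPower
  refine .add (continuous_const.div (by fun_prop) fun y => ?_)
    (continuous_const.div (by fun_prop) fun y => ?_) <;> positivity

theorem lt_at_zero (hH : H ≠ 0) (hclose : 3 * a ^ 2 ≤ H ^ 2) {y : ℝ} (hy : y ≠ 0) :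
    totalPower a H y < totalPower a H 0 := by
  have hA : 0 < (y + a) ^ 2 + H ^ 2 := by positivity
  have hB : 0 < (y - a) ^ 2 + H ^ 2 := by positivity
  have hC : 0 < a ^ 2 + H ^ 2 := by positivity
  have hy2 : 0 < y ^ 2 := by positivity
  rw [at_zero, totalPower, div_add_div _ _ hA.ne' hB.ne', div_lt_div_iff₀ (by positivity) hC]
  nlinarith [mul_pos hy2 (by linarith : 0 < y ^ 2 + H ^ 2 - 3 * a ^ 2)]

theorem le_at_zero (hH : H ≠ 0) (hclose : 3 * a ^ 2 ≤ H ^ 2) (y : ℝ) :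
    totalPower a H y ≤ totalPower a H 0 := by
  rcases eq_or_ne y 0 with rfl | hy
  · exact le_rfl
  · exact (lt_at_zero hH hclose hy).le

theorem eq_at_zero_iff (hH : H ≠ 0) (hclose : 3 * a ^ 2 ≤ H ^ 2) {y : ℝ} :
    totalPower a H y = totalPower a H 0 ↔ y = 0 :=
  ⟨fun h => by_contra fun hy => (lt_at_zero hH hclose hy).ne h, fun h => h ▸ rfl⟩

end totalPower

theorem intervalIntegral_eq_mul_iff_ae_eq_of_ae_le {f : ℝ → ℝ} {a b c : ℝ} (hab : a ≤ b)
    (hf : IntervalIntegrable f volume a b) (hle : ∀ᵐ t ∂volume.restrict (Ioc a b), f t ≤ c) :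
    (∫ t in a..b, f t) = (b - a) * c ↔ ∀ᵐ t ∂volume.restrict (Ioc a b), f t = c := by
  rw [← smul_eq_mul, ← intervalIntegral.integral_const, integral_of_le hab, integral_of_le hab]
  exact integral_eq_iff_of_ae_le hf.1 (integrable_const c) hle

theorem three_mul_half_sq_le_sq {D H : ℝ} (hD : 0 ≤ D) (hclose : D ≤ 2 * H / Real.sqrt 3) :
    3 * (D / 2) ^ 2 ≤ H ^ 2 := by
  have hsqrt : D * Real.sqrt 3 ≤ 2 * H := (le_div_iff₀ (by positivity)).mp hclose
  have hsq := pow_le_pow_left₀ (by positivity) hsqrt 2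
  rw [mul_pow, Real.sq_sqrt (by norm_num)] at hsq
  linarith

end

/-- When D ≤ 2H/√3, the total delivered energy of any trajectory is at most
T·(Q₁(0)+Q₂(0)) = 2T/(D²/4+H²), with equality iff x(t) = 0 a.e. on [0,T]. -/
theorem total_energy_bound_close (D H T : ℝ) (hD : 0 < D) (hH : 0 < H) (hT : 0 < T)
    (hclose : D ≤ 2 * H / Real.sqrt 3)
    (Q₁ Q₂ : ℝ → ℝ)
    (hQ₁ : ∀ x, Q₁ x = 1 / ((x + D / 2) ^ 2 + H ^ 2))
    (hQ₂ : ∀ x, Q₂ x = 1 / ((x - D / 2) ^ 2 + H ^ 2))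
    (x : ℝ → ℝ) (hx : Measurable x) :
    (∫ t in (0 : ℝ)..T, (Q₁ (x t) + Q₂ (x t))) ≤ T * (Q₁ 0 + Q₂ 0) ∧
    T * (Q₁ 0 + Q₂ 0) = 2 * T / (D ^ 2 / 4 + H ^ 2) ∧
    ((∫ t in (0 : ℝ)..T, (Q₁ (x t) + Q₂ (x t))) = T * (Q₁ 0 + Q₂ 0) ↔
      ∀ᵐ t ∂(volume.restrict (Set.Ioc 0 T)), x t = 0) := by
  have hP : ∀ y, Q₁ y + Q₂ y = totalPower (D / 2) H y := fun y => by
    rw [hQ₁, hQ₂, totalPower]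
  simp only [hP]
  have hhalf := three_mul_half_sq_le_sq hD.le hclose
  have hle := totalPower.le_at_zero hH.ne' hhalf
  have hint : IntervalIntegrable (fun t => totalPower (D / 2) H (x t)) volume 0 T := by
    refine (intervalIntegrable_const (c := totalPower (D / 2) H 0)).mono_fun
      ((totalPower.continuous hH.ne').measurable.comp hx).aestronglyMeasurable ?_
    filter_upwards with t
    rw [Real.norm_of_nonneg (totalPower.nonneg _ _ _), Real.norm_of_nonneg (totalPower.nonneg _ _ _)]
    exact hle _
  refine ⟨?_, by rw [totalPower.at_zero]; ring, ?_⟩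
  · simpa using integral_mono_on hT.le hint intervalIntegrable_const fun t _ => hle (x t)
  · simpa only [sub_zero, totalPower.eq_at_zero_iff hH.ne' hhalf] using
      intervalIntegral_eq_mul_iff_ae_eq_of_ae_le hT.le hint (.of_forall fun t => hle (x t))
end
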